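/- arXiv:2110.05256 — 6 statements merged into one kernel-verified Lean document; each statement's English description precedes it below -/
import Mathlib

section
/- For a code C in the Hamming space H(n,q) with q>2 that is a λ-fold 1-packing (every word of H(n,q) is within Hamming distance 1 of at most λ codewords, counted with multiplicity), the distance distribution (A_0,...,A_n), where A_i = (1/|C|)·Σ_{x∈C} |{y∈C : d(x,y)=i}|, satisfies n(q-1)A_0 + 2(q-1)A_1 + 2A_2 ≤ (n+1)(q-1)λ − q + 1. -/
/-!
Fix a codeword `x` and count the pairs `(y, v)` with `y ∈ C` and `v` in the radius-one balls
around both `x` and `y`. Grouped by `v`, each of the `1 + n(q-1)` words of the ball around `x`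
is counted at most `λ` times. Grouped by `y`, the two balls share `1 + n(q-1)`, at least `q`, or
at least `2` words when `d(x, y) = 0, 1, 2`. Hence the distance counts `a_i` of `x` satisfy
`(1 + n(q-1)) a₀ + q a₁ + 2 a₂ ≤ (1 + n(q-1)) λ`. Adding `q - 2` times the packing condition
at `x` itself, `a₀ + a₁ ≤ λ`, and `q - 1` times `a₀ ≥ 1` gives the bound for `x`; averaging over
`C` gives the theorem.
-/

open Finset Function

lemma Multiset.card_filter_eq_sum_map_ite {β : Type*} (C : Multiset β) (p : β → Prop)
    [DecidablePred p] : (C.filter p).card = (C.map fun a => if p a then 1 else 0).sum := by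
  induction C using Multiset.induction_on with
  | empty => simp
  | cons a C ih => by_cases h : p a <;> simp [h, ih, add_comm]

lemma Multiset.sum_map_card_filter {β γ : Type*} (C : Multiset β) (s : Finset γ)
    (P : γ → β → Prop) [∀ v y, Decidable (P v y)] :
    (C.map fun y => #{v ∈ s | P v y}).sum = ∑ v ∈ s, (C.filter (P v)).card := by
  simp only [card_filter, Multiset.card_filter_eq_sum_map_ite]
  exact Multiset.sum_map_sum_map C s.val

lemma Multiset.inv_card_mul_sum_map_le {β K : Type*} [Field K] [LinearOrder K]
    [IsStrictOrderedRing K] {C : Multiset β} (hC : C ≠ 0) {f : β → K} {R : K}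
    (h : ∀ x ∈ C, f x ≤ R) : (C.card : K)⁻¹ * (C.map f).sum ≤ R := by
  rw [inv_mul_le_iff₀ (by exact_mod_cast Multiset.card_pos.mpr hC)]
  simpa using Multiset.sum_le_card_nsmul (C.map f) R (by simpa using h)

variable {ι α : Type*} [Fintype ι] [DecidableEq α]

lemma hammingDist_le_one_of_forall_ne_eq {x y : ι → α} (i : ι) (h : ∀ k ≠ i, x k = y k) :
    hammingDist x y ≤ 1 :=
  (card_le_card fun k hk => mem_singleton.mpr (by by_contra hki; simp_all)).trans
    (card_singleton i).le

lemma exists_forall_ne_eq_of_hammingDist_eq_one {x y : ι → α} (h : hammingDist x y = 1) :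
    ∃ i, x i ≠ y i ∧ ∀ k ≠ i, x k = y k := by
  obtain ⟨i, hi⟩ := card_eq_one.mp h
  have hdiff (k : ι) : x k ≠ y k ↔ k = i := by simpa using Finset.ext_iff.mp hi k
  exact ⟨i, (hdiff i).mpr rfl, fun k hk => not_not.mp (mt (hdiff k).mp hk)⟩

lemma exists_forall_ne_eq_of_hammingDist_eq_two [DecidableEq ι] {x y : ι → α}
    (h : hammingDist x y = 2) :
    ∃ i j, i ≠ j ∧ x i ≠ y i ∧ ∀ k, k ≠ i → k ≠ j → x k = y k := by
  obtain ⟨i, j, hij, hi⟩ := card_eq_two.mp h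
  have hdiff (k : ι) : x k ≠ y k ↔ k = i ∨ k = j := by simpa using Finset.ext_iff.mp hi k
  refine ⟨i, j, hij, (hdiff i).mpr (.inl rfl), fun k hki hkj => ?_⟩
  exact not_not.mp (mt (hdiff k).mp (by tauto))

lemma hammingDist_update_le_one [DecidableEq ι] (x : ι → α) (i : ι) (a : α) :
    hammingDist (update x i a) x ≤ 1 :=
  hammingDist_le_one_of_forall_ne_eq i fun _ hk => update_of_ne hk a x

def distCount (C : Multiset (ι → α)) (x : ι → α) (i : ℕ) : ℕ :=
  (C.filter fun y => hammingDist x y = i).card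

def IsOnePacking (lam : ℕ) (C : Multiset (ι → α)) : Prop :=
  ∀ v, (C.filter fun c => hammingDist v c ≤ 1).card ≤ lam

variable {C : Multiset (ι → α)} {lam : ℕ}

lemma distCount_zero_add_distCount_one_le (hC : IsOnePacking lam C) (x : ι → α) :
    distCount C x 0 + distCount C x 1 ≤ lam := by
  refine le_of_eq_of_le ?_ (hC x)
  simp only [distCount, Multiset.card_filter_eq_sum_map_ite, ← Multiset.sum_map_add]
  exact congrArg _ (Multiset.map_congr rfl fun y _ => by split_ifs <;> omega)

lemma one_le_distCount_zero {x : ι → α} (hx : x ∈ C) : 1 ≤ distCount C x 0 :=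
  Multiset.card_pos_iff_exists_mem.mpr ⟨x, Multiset.mem_filter.mpr ⟨hx, hammingDist_self x⟩⟩

section

variable [DecidableEq ι] [Fintype α]

def hammingBall (x : ι → α) (r : ℕ) : Finset (ι → α) := {v | hammingDist v x ≤ r}

@[simp] lemma mem_hammingBall {x v : ι → α} {r : ℕ} :
    v ∈ hammingBall x r ↔ hammingDist v x ≤ r := by
  simp [hammingBall]

lemma card_hammingBall_one (x : ι → α) :
    #(hammingBall x 1) = 1 + Fintype.card ι * (Fintype.card α - 1) := by
  set T := univ.sigma fun i => univ.erase (x i)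
  set S := T.image fun p : Σ _ : ι, α => update x p.1 p.2
  have hball : hammingBall x 1 = insert x S := by
    ext v
    simp only [mem_hammingBall, mem_insert, S, T, mem_image, mem_sigma, mem_univ, mem_erase,
      true_and, and_true]
    constructor
    · intro hv
      rcases Nat.le_one_iff_eq_zero_or_eq_one.mp hv with h0 | h1
      · exact .inl (hammingDist_eq_zero.mp h0)
      · obtain ⟨i, hi, hrest⟩ := exists_forall_ne_eq_of_hammingDist_eq_one h1
        refine .inr ⟨⟨i, v i⟩, hi, funext fun k => ?_⟩
        by_cases hk : k = i
        · subst hk; simp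
        · rw [update_of_ne hk, hrest k hk]
    · rintro (rfl | ⟨⟨i, a⟩, -, rfl⟩)
      · simp
      · exact hammingDist_update_le_one x i a
  have hx : x ∉ S := by
    simp only [S, T, mem_image, mem_sigma, mem_univ, mem_erase, true_and, and_true, not_exists,
      not_and]
    rintro ⟨i, a⟩ ha h
    exact ha (by simpa using congrFun h i)
  have hinj : Set.InjOn (fun p : Σ _ : ι, α => update x p.1 p.2) T := by
    rintro ⟨i, a⟩ ha ⟨j, b⟩ - h
    simp only [T, coe_sigma, Set.mem_sigma_iff, coe_univ, Set.mem_univ, coe_erase,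
      Set.mem_sdiff, Set.mem_singleton_iff, true_and] at ha h
    obtain rfl : i = j := by
      by_contra hij
      exact ha (by simpa [update_of_ne hij] using congrFun h i)
    simpa using congrFun h i
  rw [hball, card_insert_of_notMem hx, card_image_of_injOn hinj, card_sigma]
  simp [add_comm]

lemma card_le_card_inter_hammingBall_of_hammingDist_eq_one {x y : ι → α}
    (h : hammingDist x y = 1) : Fintype.card α ≤ #(hammingBall x 1 ∩ hammingBall y 1) := by
  obtain ⟨i, -, hxy⟩ := exists_forall_ne_eq_of_hammingDist_eq_one h
  calc Fintype.card α = #(univ.image (update x i)) := by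
        rw [card_image_of_injective _ (update_injective x i), card_univ]
    _ ≤ _ := card_le_card fun v hv => ?_
  obtain ⟨a, -, rfl⟩ := mem_image.mp hv
  refine mem_inter.mpr ⟨mem_hammingBall.mpr (hammingDist_update_le_one x i a), ?_⟩
  exact mem_hammingBall.mpr <| hammingDist_le_one_of_forall_ne_eq i fun k hk =>
    (update_of_ne hk a x).trans (hxy k hk)

lemma two_le_card_inter_hammingBall_of_hammingDist_eq_two {x y : ι → α}
    (h : hammingDist x y = 2) : 2 ≤ #(hammingBall x 1 ∩ hammingBall y 1) := by
  obtain ⟨i, j, hij, hi, hxy⟩ := exists_forall_ne_eq_of_hammingDist_eq_two h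
  have hmid (i j : ι) (hxy : ∀ k, k ≠ i → k ≠ j → x k = y k) :
      update x i (y i) ∈ hammingBall x 1 ∩ hammingBall y 1 := by
    refine mem_inter.mpr ⟨mem_hammingBall.mpr (hammingDist_update_le_one x i _), ?_⟩
    refine mem_hammingBall.mpr (hammingDist_le_one_of_forall_ne_eq j fun k hkj => ?_)
    by_cases hki : k = i
    · subst hki; simp
    · rw [update_of_ne hki]; exact hxy k hki hkj
  have hne : update x i (y i) ≠ update x j (y j) := fun heq =>
    hi (by simpa [update_of_ne hij] using (congrFun heq i).symm)
  rw [← card_pair hne]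
  exact card_le_card (insert_subset (hmid i j hxy) (singleton_subset_iff.mpr
    (hmid j i fun k hkj hki => hxy k hki hkj)))

lemma weight_le_card_inter_hammingBall (x y : ι → α) :
    (1 + Fintype.card ι * (Fintype.card α - 1)) * (if hammingDist x y = 0 then 1 else 0)
      + Fintype.card α * (if hammingDist x y = 1 then 1 else 0)
      + 2 * (if hammingDist x y = 2 then 1 else 0)
      ≤ #(hammingBall x 1 ∩ hammingBall y 1) := by
  rcases h : hammingDist x y with _ | _ | _ | d
  · obtain rfl := hammingDist_eq_zero.mp h
    simp [card_hammingBall_one]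
  · simpa using card_le_card_inter_hammingBall_of_hammingDist_eq_one h
  · simpa using two_le_card_inter_hammingBall_of_hammingDist_eq_two h
  · simp

lemma weighted_distCount_le (hC : IsOnePacking lam C) (x : ι → α) :
    (1 + Fintype.card ι * (Fintype.card α - 1)) * distCount C x 0
      + Fintype.card α * distCount C x 1 + 2 * distCount C x 2
      ≤ (1 + Fintype.card ι * (Fintype.card α - 1)) * lam := by
  simp only [distCount, Multiset.card_filter_eq_sum_map_ite, ← Multiset.sum_map_mul_left,
    ← Multiset.sum_map_add]
  calc _ ≤ (C.map fun y => #(hammingBall x 1 ∩ hammingBall y 1)).sum :=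
        Multiset.sum_map_le_sum_map _ _ fun y _ => weight_le_card_inter_hammingBall x y
    _ = ∑ v ∈ hammingBall x 1, (C.filter fun c => hammingDist v c ≤ 1).card := by
        simp only [← filter_mem_eq_inter, mem_hammingBall]
        exact Multiset.sum_map_card_filter C _ _
    _ ≤ #(hammingBall x 1) * lam := by simpa using sum_le_card_nsmul _ _ _ fun v _ => hC v
    _ = _ := by rw [card_hammingBall_one]

lemma distCount_combination_le (hq : 2 ≤ Fintype.card α) (hC : IsOnePacking lam C) {x : ι → α}
    (hx : x ∈ C) :
    (Fintype.card ι : ℚ) * (Fintype.card α - 1) * distCount C x 0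
      + 2 * (Fintype.card α - 1) * distCount C x 1 + 2 * distCount C x 2
      ≤ (Fintype.card ι + 1) * (Fintype.card α - 1) * lam - Fintype.card α + 1 := by
  have hweighted : ((_ : ℕ) : ℚ) ≤ _ := Nat.cast_le.mpr (weighted_distCount_le hC x)
  have hball : ((_ : ℕ) : ℚ) ≤ _ := Nat.cast_le.mpr (distCount_zero_add_distCount_one_le hC x)
  have hself : ((1 : ℕ) : ℚ) ≤ _ := Nat.cast_le.mpr (one_le_distCount_zero hx)
  have hqQ : (2 : ℚ) ≤ Fintype.card α := by exact_mod_cast hq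
  push_cast [Nat.cast_sub (one_le_two.trans hq)] at hweighted hball hself
  linear_combination hweighted
    + mul_le_mul_of_nonneg_left hball (by linarith : (0 : ℚ) ≤ Fintype.card α - 2)
    + mul_le_mul_of_nonneg_left hself (by linarith : (0 : ℚ) ≤ Fintype.card α - 1)

end

/-- Lemma: λ-fold 1-packing distance distribution bound (odd case). -/
theorem stmt_0 (q n lam : ℕ) (hq : 2 < q)
    (C : Multiset (Fin n → Fin q)) (hC : C ≠ 0)
    (hpack : ∀ v : Fin n → Fin q,
      (C.filter (fun c => hammingDist v c ≤ 1)).card ≤ lam)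
    (A : ℕ → ℚ)
    (hA : ∀ i, A i = (Multiset.card C : ℚ)⁻¹ *
      ((C.map (fun x => ((C.filter (fun y => hammingDist x y = i)).card : ℚ))).sum)) :
    (n : ℚ) * (q - 1) * A 0 + 2 * (q - 1) * A 1 + 2 * A 2
      ≤ (n + 1) * (q - 1) * lam - q + 1 := by
  have hcodeword (x) (hx : x ∈ C) := distCount_combination_le (by simpa using hq.le) hpack hx
  simp only [Fintype.card_fin] at hcodeword
  calc _ = (C.card : ℚ)⁻¹ * (C.map fun x => (n : ℚ) * (q - 1) * distCount C x 0
        + 2 * (q - 1) * distCount C x 1 + 2 * distCount C x 2).sum := by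
        simp only [hA, distCount, Multiset.sum_map_add, Multiset.sum_map_mul_left]
        ring
    _ ≤ _ := Multiset.inv_card_mul_sum_map_le hC hcodeword
end

section
/- Let C be a λ-fold 1-packing in H(n,q) with q>2, and let x∈C. Then n(q-1)A_0(x) + (q-1)A_1(x) + 2A_2(x) ≤ n(q-1)λ, where A_i(x) = |{y∈C : d(x,y)=i}| (counted with multiplicity). -/
/-!
Double count the pairs `(v, c)` with `v` on the unit sphere `S` around `x`, `c ∈ C` and
`d(v, c) ≤ 1`. Each `v ∈ S` lies in at most `λ` such pairs, and `|S| = n(q-1)`. Conversely a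
codeword at distance 0, 1 or 2 from `x` is within distance 1 of at least `n(q-1)`, `q-1` or `2`
points of `S`: all of `S`; the words obtained by changing `x` in the coordinate where `c` differs;
the two words obtained by copying one of the two differing coordinates of `c` into `x`.
-/

open Finset Function

theorem Multiset.card_filter_eq_sum_map_boole {α : Type*} (s : Multiset α) (p : α → Prop)
    [DecidablePred p] : (s.filter p).card = (s.map fun a => if p a then 1 else 0).sum := by
  induction s using Multiset.induction with
  | empty => simp
  | cons a s ih => by_cases h : p a <;> simp [h, ih, add_comm]

theorem Multiset.sum_map_card_filter_comm {α β : Type*} (S : Finset β) (C : Multiset α)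
    (r : β → α → Prop) [∀ b a, Decidable (r b a)] :
    (C.map fun c => #{v ∈ S | r v c}).sum = ∑ v ∈ S, (C.filter (r v)).card := by
  simp only [Finset.card_filter, Multiset.card_filter_eq_sum_map_boole, Finset.sum_eq_multiset_sum]
  exact Multiset.sum_map_sum_map _ _

theorem eq_of_update_eq_update {ι α : Type*} [DecidableEq ι] {x : ι → α} {i j : ι}
    {a b : α} (ha : a ≠ x i) (h : update x i a = update x j b) : i = j := by
  by_contra hij
  exact ha (by simpa [update_of_ne hij] using congrFun h i)

section Hamming

variable {ι α : Type*} [Fintype ι] [DecidableEq ι] [DecidableEq α]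

theorem hammingDist_update_apply_add_one {x y : ι → α} {i : ι} (h : x i ≠ y i) :
    hammingDist (update x i (y i)) y + 1 = hammingDist x y := by
  have : ({j | update x i (y i) j ≠ y j} : Finset ι) =
      ({j | x j ≠ y j} : Finset ι).erase i := by
    ext j
    by_cases hj : j = i <;> simp [hj]
  rw [hammingDist, hammingDist, this, card_erase_add_one (by simpa using h)]

theorem hammingDist_update_of_ne {x : ι → α} {i : ι} {b : α} (h : b ≠ x i) :
    hammingDist x (update x i b) = 1 := by
  have := hammingDist_update_apply_add_one (y := update x i b) (i := i) (by simpa using h.symm)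
  simpa using this.symm

theorem hammingDist_update_update_le_one (x : ι → α) (i : ι) (a b : α) :
    hammingDist (update x i a) (update x i b) ≤ 1 := by
  calc hammingDist (update x i a) (update x i b) ≤ #{i} := by
        refine card_le_card fun j hj => ?_
        by_contra hji
        simp [update_of_ne (mem_singleton.not.mp hji)] at hj
    _ = 1 := card_singleton i

theorem eq_update_of_hammingDist_eq_one {x y : ι → α} {i : ι} (h : x i ≠ y i)
    (hxy : hammingDist x y = 1) : y = update x i (y i) := by
  have := hammingDist_update_apply_add_one h
  exact (hammingDist_eq_zero.mp (by omega)).symm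

variable [Fintype α]

def hammingSphere (x : ι → α) (r : ℕ) : Finset (ι → α) := {v | hammingDist x v = r}

theorem card_hammingSphere_one (x : ι → α) :
    #(hammingSphere x 1) = Fintype.card ι * (Fintype.card α - 1) := by
  calc #(hammingSphere x 1) = #(univ.sigma fun i => univ.erase (x i)) := by
        symm
        refine card_bij (fun p _ => update x p.1 p.2) ?_ ?_ ?_
        · rintro ⟨i, b⟩ hb
          simpa [hammingSphere] using hammingDist_update_of_ne (by simpa using hb)
        · rintro ⟨i, a⟩ ha ⟨j, b⟩ - h
          obtain rfl := eq_of_update_eq_update (by simpa using ha) h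
          simpa using update_injective x i h
        · intro v hv
          simp only [hammingSphere, mem_filter, mem_univ, true_and] at hv
          obtain ⟨i, hi⟩ :=
            Function.ne_iff.mp (hammingDist_pos.mp (by omega : 0 < hammingDist x v))
          exact ⟨⟨i, v i⟩, by simpa using hi.symm,
            (eq_update_of_hammingDist_eq_one hi hv).symm⟩
    _ = Fintype.card ι * (Fintype.card α - 1) := by simp [card_sigma]

theorem card_filter_hammingSphere_one_self (x : ι → α) :
    #{v ∈ hammingSphere x 1 | hammingDist v x ≤ 1} =
      Fintype.card ι * (Fintype.card α - 1) := by
  rw [filter_true_of_mem fun v hv => by simp_all [hammingSphere, hammingDist_comm],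
    card_hammingSphere_one]

theorem card_sub_one_le_card_filter_hammingSphere_one {x c : ι → α} (h : hammingDist x c = 1) :
    Fintype.card α - 1 ≤ #{v ∈ hammingSphere x 1 | hammingDist v c ≤ 1} := by
  obtain ⟨i, hi⟩ := Function.ne_iff.mp (hammingDist_pos.mp (by omega : 0 < hammingDist x c))
  have hc := eq_update_of_hammingDist_eq_one hi h
  calc Fintype.card α - 1 = #(univ.erase (x i)) := by simp
    _ ≤ _ := by
      refine card_le_card_of_injOn (update x i) (fun b hb => ?_) (update_injective x i).injOn
      simp only [mem_coe, mem_erase, hammingSphere, mem_filter, mem_univ, true_and,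
        and_true] at hb ⊢
      exact ⟨hammingDist_update_of_ne hb, hc ▸ hammingDist_update_update_le_one x i b (c i)⟩

theorem two_le_card_filter_hammingSphere_one {x c : ι → α} (h : hammingDist x c = 2) :
    2 ≤ #{v ∈ hammingSphere x 1 | hammingDist v c ≤ 1} := by
  calc 2 = #{i | x i ≠ c i} := h.symm
    _ ≤ _ := by
      refine card_le_card_of_injOn (fun i => update x i (c i)) (fun i hi => ?_) ?_
      · simp only [mem_coe, hammingSphere, mem_filter, mem_univ, true_and] at hi ⊢
        have := hammingDist_update_apply_add_one hi
        exact ⟨hammingDist_update_of_ne (Ne.symm hi), by omega⟩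
      · intro i hi j _ hij
        simp only [mem_coe, mem_filter, mem_univ, true_and] at hi
        exact eq_of_update_eq_update (Ne.symm hi) hij

theorem packingWeight_le_card_filter_hammingSphere_one (x c : ι → α) :
    Fintype.card ι * (Fintype.card α - 1) * (if hammingDist x c = 0 then 1 else 0)
      + (Fintype.card α - 1) * (if hammingDist x c = 1 then 1 else 0)
      + 2 * (if hammingDist x c = 2 then 1 else 0)
      ≤ #{v ∈ hammingSphere x 1 | hammingDist v c ≤ 1} := by
  obtain h | h | h | h : hammingDist x c = 0 ∨ hammingDist x c = 1 ∨ hammingDist x c = 2 ∨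
      2 < hammingDist x c := by omega
  · obtain rfl := hammingDist_eq_zero.mp h
    simp [card_filter_hammingSphere_one_self]
  · simpa [h] using card_sub_one_le_card_filter_hammingSphere_one h
  · simpa [h] using two_le_card_filter_hammingSphere_one h
  · have : hammingDist x c ≠ 0 ∧ hammingDist x c ≠ 1 ∧ hammingDist x c ≠ 2 := by omega
    simp only [this, if_false, mul_zero, add_zero, zero_le]

end Hamming

theorem stmt_2_general (q n lam : ℕ)
    (C : Multiset (Fin n → Fin q))
    (hpack : ∀ v : Fin n → Fin q,
      (C.filter (fun c => hammingDist v c ≤ 1)).card ≤ lam)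
    (x : Fin n → Fin q) :
    n * (q - 1) * (C.filter (fun y => hammingDist x y = 0)).card
      + (q - 1) * (C.filter (fun y => hammingDist x y = 1)).card
      + 2 * (C.filter (fun y => hammingDist x y = 2)).card
      ≤ n * (q - 1) * lam := by
  calc _ = (C.map fun c => n * (q - 1) * (if hammingDist x c = 0 then 1 else 0)
          + (q - 1) * (if hammingDist x c = 1 then 1 else 0)
          + 2 * (if hammingDist x c = 2 then 1 else 0)).sum := by
        simp only [Multiset.sum_map_add, Multiset.sum_map_mul_left,
          Multiset.card_filter_eq_sum_map_boole]
    _ ≤ (C.map fun c => #{v ∈ hammingSphere x 1 | hammingDist v c ≤ 1}).sum :=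
        Multiset.sum_map_le_sum_map _ _ fun c _ => by
          simpa using packingWeight_le_card_filter_hammingSphere_one x c
    _ = ∑ v ∈ hammingSphere x 1, (C.filter fun c => hammingDist v c ≤ 1).card :=
        Multiset.sum_map_card_filter_comm _ _ _
    _ ≤ ∑ _v ∈ hammingSphere x 1, lam := sum_le_sum fun v _ => hpack v
    _ = n * (q - 1) * lam := by simp [card_hammingSphere_one]

/-- Pointwise inequality for a λ-fold 1-packing. -/
theorem stmt_2 (q n lam : ℕ) (hq : 2 < q)
    (C : Multiset (Fin n → Fin q))
    (hpack : ∀ v : Fin n → Fin q,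
      (C.filter (fun c => hammingDist v c ≤ 1)).card ≤ lam)
    (x : Fin n → Fin q) (hx : x ∈ C) :
    n * (q - 1) * (C.filter (fun y => hammingDist x y = 0)).card
      + (q - 1) * (C.filter (fun y => hammingDist x y = 1)).card
      + 2 * (C.filter (fun y => hammingDist x y = 2)).card
      ≤ n * (q - 1) * lam :=
  stmt_2_general q n lam C hpack x
end

section
/- If q>2 and n ≡ q (mod q²), then every λ-fold 1-packing C in H(n,q) with minimum distance 2 (all codewords distinct and pairwise at Hamming distance ≥ 2) satisfies |C| ≤ λq^n/(n(q−1)+q). -/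
/-!
Write `n = card ι`, `q = card G`, `T ψ = ∑ c ∈ C, ψ c` for characters `ψ` of `ι → G`, and `N v`
for the number of codewords at distance at most one from `v`. The sum of `ψ` over the Hamming
ball of radius one is `1 + k ψ` with `k ψ = n (q - 1) - q w(ψ)`, `w(ψ)` the Hamming weight of
`ψ`. Since `k (k + q) = (k + 1)² + (q - 2) (k + 1) - (q - 1)`, Plancherel turns
`∑ ψ, k ψ (k ψ + q) ‖T ψ‖²` into `q ^ n (∑ v, (N v)² - |C|)`; minimum distance two makes
`N = 1` on `C`. When `q ∣ n` every `k ψ` is a multiple of `q`, so all summands are nonnegative and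
the trivial character alone gives `n (q - 1) (n (q - 1) + q) |C|² ≤ q ^ n (∑ v, (N v)² - |C|)`.
Finally `N ≤ λ` and `∑ v, N v = (n (q - 1) + 1) |C|` bound the right side by
`q ^ n λ n (q - 1) |C|`.
-/

open Finset ComplexConjugate

namespace AddChar

variable {α : Type*} [AddCommGroup α] [Fintype α] [DecidableEq α]

theorem sum_conj_mul_sum (f h : α → ℂ) :
    ∑ ψ : AddChar α ℂ, conj (∑ x, f x * ψ x) * ∑ y, h y * ψ y =
      Fintype.card α * ∑ x, conj (f x) * h x := by
  calc _ = ∑ x, ∑ y, conj (f x) * h y * ∑ ψ : AddChar α ℂ, ψ (y - x) := by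
        simp_rw [map_sum, map_mul, ← map_neg_eq_conj, sum_mul_sum, sum_comm (γ := AddChar α ℂ),
          mul_sum, sub_eq_add_neg, map_add_eq_mul]
        refine sum_congr rfl fun x _ => sum_congr rfl fun y _ => sum_congr rfl fun ψ _ => ?_
        ring
    _ = _ := by
        simp only [mul_comm, sum_apply_eq_ite, sub_eq_zero, ite_mul, zero_mul, sum_ite_eq',
          mem_univ, ↓reduceIte, mul_sum]

variable (C S : Finset α)

theorem sum_card_filter_sub_mem_mul (ψ : AddChar α ℂ) :
    ∑ v, (#{c ∈ C | v - c ∈ S} : ℂ) * ψ v = (∑ c ∈ C, ψ c) * ∑ u ∈ S, ψ u := by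
  simp_rw [card_filter, Nat.cast_sum, sum_mul, Nat.cast_ite, Nat.cast_one, Nat.cast_zero, ite_mul,
    one_mul, zero_mul]
  rw [sum_comm]
  refine sum_congr rfl fun c _ => ?_
  rw [← Equiv.sum_comp (Equiv.addLeft c)]
  simp [mul_sum, map_add_eq_mul, sum_ite_mem]

theorem sum_norm_sum_sq :
    ∑ ψ : AddChar α ℂ, ‖∑ c ∈ C, ψ c‖ ^ 2 = Fintype.card α * #C := by
  have h := sum_conj_mul_sum (fun x => if x ∈ C then 1 else 0)
    (fun x => if x ∈ C then 1 else 0)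
  simp only [ite_mul, one_mul, zero_mul, sum_ite_mem, univ_inter, apply_ite conj, map_one,
    map_zero, mul_ite, mul_one, mul_zero, inter_self, sum_const, nsmul_eq_mul,
    Complex.conj_mul'] at h
  exact_mod_cast h

theorem sum_conj_mul_sum_mul_sum :
    ∑ ψ : AddChar α ℂ, conj (∑ c ∈ C, ψ c) * ((∑ c ∈ C, ψ c) * ∑ u ∈ S, ψ u) =
      Fintype.card α * ∑ x ∈ C, (#{c ∈ C | x - c ∈ S} : ℂ) := by
  have h := sum_conj_mul_sum (fun x => if x ∈ C then 1 else 0)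
    (fun x => (#{c ∈ C | x - c ∈ S} : ℂ))
  simpa [ite_mul, sum_ite_mem, sum_card_filter_sub_mem_mul, apply_ite conj] using h

theorem sum_norm_sum_mul_sum_sq :
    ∑ ψ : AddChar α ℂ, ‖(∑ c ∈ C, ψ c) * ∑ u ∈ S, ψ u‖ ^ 2 =
      Fintype.card α * ∑ x, (#{c ∈ C | x - c ∈ S} : ℝ) ^ 2 := by
  have h := sum_conj_mul_sum (fun x => (#{c ∈ C | x - c ∈ S} : ℂ))
    (fun x => (#{c ∈ C | x - c ∈ S} : ℂ))
  simp only [sum_card_filter_sub_mem_mul, Complex.conj_mul', Complex.conj_natCast, ← sq] at h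
  exact_mod_cast h

end AddChar

variable {ι G : Type*} [Fintype ι]

section HammingBall
variable [DecidableEq ι] [Zero G] [DecidableEq G]

theorem hammingNorm_single {i : ι} {t : G} (ht : t ≠ 0) :
    hammingNorm (Pi.single i t : ι → G) = 1 := by
  rw [hammingNorm, card_eq_one]
  exact ⟨i, by ext j; by_cases h : j = i <;> simp [h, ht]⟩

theorem exists_eq_single_of_hammingNorm_eq_one {u : ι → G} (hu : hammingNorm u = 1) :
    ∃ i, u i ≠ 0 ∧ Pi.single i (u i) = u := by
  obtain ⟨i, hi⟩ := card_eq_one.mp hu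
  have hsupp : ∀ j, u j ≠ 0 ↔ j = i := fun j => by simpa using congrArg (j ∈ ·) hi
  refine ⟨i, (hsupp i).mpr rfl, funext fun j => ?_⟩
  by_cases h : j = i
  · subst h; simp
  · simpa [h, eq_comm] using ((hsupp j).not.mpr h)

theorem sum_hammingNorm_le_one [Fintype G] {M : Type*} [AddCommMonoid M]
    (f : (ι → G) → M) :
    ∑ u with hammingNorm u ≤ 1, f u = f 0 + ∑ i, ∑ t ∈ univ.erase 0, f (Pi.single i t) := by
  have hball : ({u | hammingNorm u ≤ 1} : Finset (ι → G)) =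
      insert 0 ({u | hammingNorm u = 1} : Finset (ι → G)) := by
    ext u
    rw [mem_insert, mem_filter_univ, mem_filter_univ, ← hammingNorm_eq_zero]
    omega
  rw [hball, sum_insert (by simp), ← sum_product']
  congr 1
  symm
  refine sum_bij (fun p _ => Pi.single p.1 p.2) ?_ ?_ ?_ (fun _ _ => rfl)
  · intro p hp
    exact (mem_filter_univ _).mpr (hammingNorm_single (mem_erase.mp (mem_product.mp hp).2).1)
  · rintro ⟨i, t⟩ hp ⟨j, s⟩ - h
    have ht := (mem_erase.mp (mem_product.mp hp).2).1
    have hij : i = j := by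
      by_contra hij
      exact ht (by simpa [Pi.single_eq_of_ne hij] using congrFun h i)
    subst hij
    simpa using Pi.single_injective i h
  · intro u hu
    obtain ⟨i, hi, hu⟩ := exists_eq_single_of_hammingNorm_eq_one ((mem_filter_univ u).mp hu)
    exact ⟨(i, u i), by simp [hi], hu⟩

end HammingBall

namespace AddChar
variable [DecidableEq ι] [AddCommGroup G]

/-- Viewing `ψ` as a vector of characters of `G`, `#ψ.coordSupport` is its Hamming weight. -/
noncomputable def coordSupport {M : Type*} [CommMonoid M] (ψ : AddChar (ι → G) M) : Finset ι :=
  {i | ψ.compAddMonoidHom (AddMonoidHom.single (fun _ => G) i) ≠ 0}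

@[simp] theorem coordSupport_zero {M : Type*} [CommMonoid M] :
    (0 : AddChar (ι → G) M).coordSupport = ∅ := by
  ext i
  simp only [coordSupport, ne_eq, mem_filter, mem_univ, true_and, notMem_empty, iff_false,
    Decidable.not_not]
  rfl

theorem sum_hammingNorm_le_one_apply [Fintype G] [DecidableEq G] {R : Type*} [CommRing R]
    [IsDomain R] (ψ : AddChar (ι → G) R) :
    ∑ u with hammingNorm u ≤ 1, ψ u =
      ((Fintype.card ι * (Fintype.card G - 1) + 1 - Fintype.card G * #ψ.coordSupport : ℤ) :
        R) := by
  have hline : ∀ i, ∑ t ∈ univ.erase 0, ψ (Pi.single i t) =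
      Fintype.card G - (if i ∈ ψ.coordSupport then (Fintype.card G : R) else 0) - 1 := by
    intro i
    rw [sum_erase_eq_sub (mem_univ 0), Pi.single_zero, map_zero_eq_one]
    have := (ψ.compAddMonoidHom (AddMonoidHom.single (fun _ => G) i)).sum_eq_ite
    simp only [compAddMonoidHom_apply, AddMonoidHom.single_apply] at this
    rw [this]
    split_ifs <;> simp_all [coordSupport]
  rw [_root_.sum_hammingNorm_le_one, map_zero_eq_one]
  simp_rw [hline]
  rw [sum_sub_distrib, sum_sub_distrib, sum_ite_mem, univ_inter]
  simp only [sum_const, card_univ, nsmul_eq_mul, mul_one]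
  push_cast
  ring

end AddChar

theorem card_filter_hammingDist_le_one_of_mem [DecidableEq G]
    (C : Finset (ι → G)) (hC : ∀ x ∈ C, ∀ y ∈ C, x ≠ y → 2 ≤ hammingDist x y) {x : ι → G}
    (hx : x ∈ C) :
    #{c ∈ C | hammingDist x c ≤ 1} = 1 := by
  rw [card_eq_one]
  refine ⟨x, ext fun c => ⟨fun hc => ?_, fun hc => ?_⟩⟩
  · rw [mem_filter] at hc
    by_contra hcx
    have := hC x hx c hc.1 (Ne.symm (mt mem_singleton.mpr hcx))
    omega
  · rw [mem_singleton.mp hc]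
    simp [hx]

section Packing

variable [DecidableEq ι] [AddCommGroup G] [Fintype G] [DecidableEq G] (C : Finset (ι → G))

theorem filter_sub_mem_hammingBall (v : ι → G) :
    {c ∈ C | v - c ∈ ({u | hammingNorm u ≤ 1} : Finset (ι → G))} =
      {c ∈ C | hammingDist v c ≤ 1} := by
  ext c
  simp only [mem_filter, mem_univ, true_and]
  rw [hammingDist_comm, hammingDist_eq_hammingNorm, neg_add_eq_sub]

theorem sum_mul_add_mul_norm_sq_eq (hC : ∀ x ∈ C, ∀ y ∈ C, x ≠ y → 2 ≤ hammingDist x y) :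
    ∑ ψ : AddChar (ι → G) ℂ,
      (Fintype.card ι * (Fintype.card G - 1) - Fintype.card G * #ψ.coordSupport : ℝ) *
        (Fintype.card ι * (Fintype.card G - 1) - Fintype.card G * #ψ.coordSupport +
          Fintype.card G) * ‖∑ c ∈ C, ψ c‖ ^ 2 =
      Fintype.card G ^ Fintype.card ι *
        (∑ v, (#{c ∈ C | hammingDist v c ≤ 1} : ℝ) ^ 2 - #C) := by
  set q : ℕ := Fintype.card G
  set k : AddChar (ι → G) ℂ → ℝ := fun ψ => Fintype.card ι * (q - 1) - q * #ψ.coordSupport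
  have hB : ∀ ψ : AddChar (ι → G) ℂ, ∑ u with hammingNorm u ≤ 1, ψ u = (k ψ + 1 : ℝ) := by
    intro ψ
    rw [AddChar.sum_hammingNorm_le_one_apply]
    push_cast [k]
    ring
  have h0 := AddChar.sum_norm_sum_sq C
  have h1 := AddChar.sum_conj_mul_sum_mul_sum C {u | hammingNorm u ≤ 1}
  have h2 := AddChar.sum_norm_sum_mul_sum_sq C {u | hammingNorm u ≤ 1}
  simp only [hB, filter_sub_mem_hammingBall, Fintype.card_fun] at h0 h1 h2
  have hcov : ∑ x ∈ C, (#{c ∈ C | hammingDist x c ≤ 1} : ℂ) = #C := by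
    rw [sum_congr rfl fun x hx =>
      congrArg Nat.cast (card_filter_hammingDist_le_one_of_mem C hC hx)]
    simp
  rw [hcov] at h1
  have h1' : ∑ ψ : AddChar (ι → G) ℂ, ‖∑ c ∈ C, ψ c‖ ^ 2 * (k ψ + 1) =
      (q : ℝ) ^ Fintype.card ι * #C := by
    have : ∀ z : ℂ, ∀ r : ℝ, conj z * (z * r) = ((‖z‖ ^ 2 * r : ℝ) : ℂ) := by
      intro z r; push_cast; rw [← Complex.conj_mul']; ring
    simp only [this] at h1
    exact_mod_cast h1
  simp only [norm_mul, Complex.norm_real, Real.norm_eq_abs, mul_pow, sq_abs] at h2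
  calc _ = ∑ ψ : AddChar (ι → G) ℂ, (‖∑ c ∈ C, ψ c‖ ^ 2 * (k ψ + 1) ^ 2 +
        (q - 2) * (‖∑ c ∈ C, ψ c‖ ^ 2 * (k ψ + 1)) - (q - 1) * ‖∑ c ∈ C, ψ c‖ ^ 2) :=
        sum_congr rfl fun ψ _ => by ring
    _ = _ := by
        rw [sum_sub_distrib, sum_add_distrib, ← mul_sum, ← mul_sum, h0, h1', h2]
        push_cast
        ring

theorem Int.mul_add_nonneg_of_dvd {a b : ℤ} (h : b ∣ a) : 0 ≤ a * (a + b) := by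
  obtain ⟨m, rfl⟩ := h
  have hm : 0 ≤ m * (m + 1) := by
    rcases le_or_gt 0 m with hm | hm <;> nlinarith
  calc 0 ≤ b ^ 2 * (m * (m + 1)) := by positivity
    _ = b * m * (b * m + b) := by ring

theorem mul_card_sq_le_of_dvd (hdvd : Fintype.card G ∣ Fintype.card ι)
    (hC : ∀ x ∈ C, ∀ y ∈ C, x ≠ y → 2 ≤ hammingDist x y) :
    (Fintype.card ι * (Fintype.card G - 1) : ℝ) *
        (Fintype.card ι * (Fintype.card G - 1) + Fintype.card G) * #C ^ 2 ≤
      Fintype.card G ^ Fintype.card ι *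
        (∑ v, (#{c ∈ C | hammingDist v c ≤ 1} : ℝ) ^ 2 - #C) := by
  rw [← sum_mul_add_mul_norm_sq_eq C hC]
  refine le_of_eq_of_le ?_ (single_le_sum (fun ψ _ => ?_) (mem_univ 0))
  · simp
  · have hk : (Fintype.card G : ℤ) ∣
        Fintype.card ι * (Fintype.card G - 1) - Fintype.card G * #ψ.coordSupport :=
      ((Int.natCast_dvd_natCast.mpr hdvd).mul_right _).sub (dvd_mul_right _ _)
    exact mul_nonneg (by exact_mod_cast Int.mul_add_nonneg_of_dvd hk) (sq_nonneg _)

theorem sum_card_filter_hammingDist_le_one :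
    ∑ v, (#{c ∈ C | hammingDist v c ≤ 1} : ℝ) =
      (Fintype.card ι * (Fintype.card G - 1) + 1) * #C := by
  have h := AddChar.sum_card_filter_sub_mem_mul C {u | hammingNorm u ≤ 1} 0
  rw [AddChar.sum_hammingNorm_le_one_apply] at h
  simp only [filter_sub_mem_hammingBall, AddChar.zero_apply, mul_one, sum_const, nsmul_eq_mul,
    AddChar.coordSupport_zero, card_empty] at h
  apply Complex.ofReal_injective
  push_cast at h ⊢
  linear_combination h

theorem sum_card_filter_hammingDist_le_one_sq_sub_le (lam : ℕ)
    (hC : ∀ x ∈ C, ∀ y ∈ C, x ≠ y → 2 ≤ hammingDist x y)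
    (hpack : ∀ v, #{c ∈ C | hammingDist v c ≤ 1} ≤ lam) :
    ∑ v, (#{c ∈ C | hammingDist v c ≤ 1} : ℝ) ^ 2 - #C ≤
      lam * (Fintype.card ι * (Fintype.card G - 1)) * #C := by
  have hpt : ∀ v, (#{c ∈ C | hammingDist v c ≤ 1} : ℝ) ^ 2 +
      (lam - 1) * (if v ∈ C then 1 else 0) ≤ lam * #{c ∈ C | hammingDist v c ≤ 1} := by
    intro v
    have hle : (#{c ∈ C | hammingDist v c ≤ 1} : ℝ) ≤ lam := by exact_mod_cast hpack v
    split_ifs with hv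
    · rw [card_filter_hammingDist_le_one_of_mem C hC hv]
      push_cast
      linarith
    · nlinarith
  have hsum := sum_le_sum fun v (_ : v ∈ univ) => hpt v
  rw [sum_add_distrib, ← mul_sum, ← mul_sum, sum_card_filter_hammingDist_le_one, sum_boole,
    filter_univ_mem] at hsum
  linarith

theorem card_mul_le_of_one_packing [Nonempty ι] [Nontrivial G]
    (hdvd : Fintype.card G ∣ Fintype.card ι) (lam : ℕ)
    (hC : ∀ x ∈ C, ∀ y ∈ C, x ≠ y → 2 ≤ hammingDist x y)
    (hpack : ∀ v, #{c ∈ C | hammingDist v c ≤ 1} ≤ lam) :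
    #C * (Fintype.card ι * (Fintype.card G - 1) + Fintype.card G) ≤
      lam * Fintype.card G ^ Fintype.card ι := by
  set n := Fintype.card ι
  set q := Fintype.card G
  have hq : 1 ≤ q := Fintype.card_pos
  rcases (#C).eq_zero_or_pos with hC0 | hCpos
  · simp [hC0]
  have hpos : (0 : ℝ) < n * (q - 1) * #C := by
    have : (1 : ℝ) < q := by exact_mod_cast Fintype.one_lt_card
    have : (0 : ℝ) < n := by exact_mod_cast Fintype.card_pos
    positivity
  have key : (n * (q - 1) * #C : ℝ) * (#C * (n * (q - 1) + q)) ≤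
      (n * (q - 1) * #C) * (lam * q ^ n) := calc
    _ = (n * (q - 1) : ℝ) * (n * (q - 1) + q) * #C ^ 2 := by ring
    _ ≤ q ^ n * (∑ v, (#{c ∈ C | hammingDist v c ≤ 1} : ℝ) ^ 2 - #C) :=
        mul_card_sq_le_of_dvd C hdvd hC
    _ ≤ q ^ n * (lam * (n * (q - 1)) * #C) := by
        gcongr
        exact sum_card_filter_hammingDist_le_one_sq_sub_le C lam hC hpack
    _ = _ := by ring
  have := le_of_mul_le_mul_left key hpos
  exact_mod_cast (by push_cast [Nat.cast_sub hq]; exact this :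
    ((#C * (n * (q - 1) + q) : ℕ) : ℝ) ≤ ((lam * q ^ n : ℕ) : ℝ))

end Packing

theorem Nat.dvd_and_pos_of_mod_sq_eq {q n : ℕ} (hq : 1 < q) (h : n % q ^ 2 = q % q ^ 2) :
    q ∣ n ∧ 0 < n := by
  have hq2 : q % q ^ 2 = q := Nat.mod_eq_of_lt (by nlinarith)
  refine ⟨?_, Nat.pos_of_ne_zero fun hn => ?_⟩
  · rw [Nat.dvd_iff_mod_eq_zero, ← Nat.mod_mod_of_dvd n (dvd_pow_self q two_ne_zero), h, hq2,
      Nat.mod_self]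
  · rw [hn, Nat.zero_mod, hq2] at h
    omega

/-- Bound for λ-fold 1-packings with minimum distance 2. -/
theorem stmt_9 (q n lam : ℕ) (hq : 2 < q) (hmod : n % q ^ 2 = q % q ^ 2)
    (C : Finset (Fin n → Fin q))
    (hdist : ∀ x ∈ C, ∀ y ∈ C, x ≠ y → 2 ≤ hammingDist x y)
    (hpack : ∀ v : Fin n → Fin q,
      (C.filter (fun c => hammingDist v c ≤ 1)).card ≤ lam) :
    (C.card : ℚ) ≤ lam * q ^ n / (n * (q - 1) + q) := by
  obtain ⟨hdvd, hn⟩ := Nat.dvd_and_pos_of_mod_sq_eq (by omega) hmod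
  have : NeZero q := ⟨by omega⟩
  have : Nontrivial (Fin q) := Fin.nontrivial_iff_two_le.mpr hq.le
  have : Nonempty (Fin n) := ⟨⟨0, hn⟩⟩
  have h := card_mul_le_of_one_packing C (by simpa using hdvd) lam hdist hpack
  simp only [Fintype.card_fin] at h
  have hden : ((n * (q - 1) + q : ℕ) : ℚ) = n * (q - 1) + q := by
    push_cast [Nat.cast_sub (by omega : 1 ≤ q)]
    ring
  rw [← hden, le_div_iff₀ (by positivity)]
  exact_mod_cast h
end

section
/- Let C be a λ-fold 1-packing in H(n,q) with q>2 and n ≡ q (mod q²), and let x ∈ C. Then the number of codewords at distance exactly 2 from x satisfies A_2(x) ≤ n(q−1)(λ − A_0(x))/2, where A_0(x) is the multiplicity of x in C. -/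
open Finset

private lemma msum_swap {α β : Type*} (s : Multiset α) (t : Finset β) (f : β → α → ℕ) :
    (s.map fun y => ∑ b ∈ t, f b y).sum = ∑ b ∈ t, (s.map (f b)).sum := by
  induction s using Multiset.induction with
  | empty => simp
  | cons a s ih => simp [ih, Finset.sum_add_distrib]

private lemma countP_as_sum {α : Type*} (s : Multiset α) (p : α → Prop) [DecidablePred p] :
    s.countP p = (s.map fun y => if p y then 1 else 0).sum := by
  induction s using Multiset.induction with
  | empty => simp
  | cons a s ih => simp [Multiset.countP_cons, ih]; split <;> simp [Nat.add_comm]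

private lemma hd_update_le {n q : ℕ} (x : Fin n → Fin q) (i : Fin n) (a : Fin q) :
    hammingDist (Function.update x i a) x ≤ 1 := by
  have hsub : (Finset.univ.filter fun k => Function.update x i a k ≠ x k) ⊆ {i} := by
    intro k hk
    simp only [Finset.mem_filter, Finset.mem_univ, true_and] at hk
    by_contra hki
    simp only [Finset.mem_singleton] at hki
    exact hk (by rw [Function.update_of_ne hki])
  calc hammingDist (Function.update x i a) x
      = (Finset.univ.filter fun k => Function.update x i a k ≠ x k).card := rfl
    _ ≤ ({i} : Finset (Fin n)).card := Finset.card_le_card hsub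
    _ = 1 := Finset.card_singleton i

/-- Pointwise bound on A₂(x) for a λ-fold 1-packing, n ≡ q (mod q²). -/
theorem stmt_10 (q n lam : ℕ) (hq : 2 < q) (hmod : n % q ^ 2 = q % q ^ 2)
    (C : Multiset (Fin n → Fin q))
    (hpack : ∀ v : Fin n → Fin q,
      (C.filter (fun c => hammingDist v c ≤ 1)).card ≤ lam)
    (x : Fin n → Fin q) (hx : x ∈ C) :
    ((C.filter (fun y => hammingDist x y = 2)).card : ℚ)
      ≤ n * (q - 1) * (lam - C.count x) / 2 := by
  classical
  set S : Finset (Fin n × Fin q) := Finset.univ.filter (fun p => p.2 ≠ x p.1) with hS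
  set P2 : (Fin n → Fin q) → Prop := fun y => hammingDist x y = 2 with hP2
  set ind : (Fin n × Fin q) → (Fin n → Fin q) → ℕ :=
    fun p y => if P2 y ∧ hammingDist (Function.update x p.1 p.2) y ≤ 1 then 1 else 0 with hind
  -- multiplicity of x is at most lam
  have hm : C.count x ≤ lam := by
    calc C.count x = (C.filter (x = ·)).card := Multiset.count_eq_card_filter_eq C x
    _ ≤ (C.filter (fun c => hammingDist x c ≤ 1)).card := by
        apply Multiset.card_le_card
        apply Multiset.monotone_filter_right
        intro c hc; subst hc; simp
    _ ≤ lam := hpack x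
  -- cardinality of S
  have hScard : S.card = n * (q - 1) := by
    rw [hS, Finset.card_filter, Fintype.sum_prod_type]
    have h1 : ∀ i : Fin n, (∑ a : Fin q, if a ≠ x i then 1 else 0) = q - 1 := by
      intro i
      have h2 : (∑ a : Fin q, if a ≠ x i then 1 else 0)
          + (∑ a : Fin q, if a = x i then 1 else 0) = q := by
        rw [← Finset.sum_add_distrib]
        have e : ∀ a ∈ (Finset.univ : Finset (Fin q)),
            ((if a ≠ x i then 1 else 0) + (if a = x i then 1 else 0)) = 1 := by
          intro a _; by_cases h : a = x i <;> simp [h]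
        rw [Finset.sum_congr rfl e]; simp
      have h3 : (∑ a : Fin q, if a = x i then 1 else 0) = 1 := by
        simp [Finset.sum_ite_eq']
      omega
    simp only [h1, Finset.sum_const, Finset.card_univ, Fintype.card_fin, smul_eq_mul]
  -- key pointwise count: each y at distance 2 is covered by ≥ 2 pairs
  have key1 : ∀ y : Fin n → Fin q, P2 y →
      2 ≤ ∑ p ∈ S, (if hammingDist (Function.update x p.1 p.2) y ≤ 1 then 1 else 0) := by
    intro y hy
    have hcard : (Finset.univ.filter fun i => x i ≠ y i).card = 2 := hy
    obtain ⟨i, j, hij, hset⟩ := Finset.card_eq_two.mp hcard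
    have hmem : ∀ k, x k ≠ y k ↔ (k = i ∨ k = j) := by
      intro k; have := Finset.ext_iff.mp hset k; simpa using this
    have hxi : x i ≠ y i := (hmem i).mpr (Or.inl rfl)
    have hxj : x j ≠ y j := (hmem j).mpr (Or.inr rfl)
    have hdist : ∀ a b : Fin n, (∀ k, x k ≠ y k → k = a ∨ k = b) →
        hammingDist (Function.update x a (y a)) y ≤ 1 := by
      intro a b hk
      have hsub : (Finset.univ.filter fun k => Function.update x a (y a) k ≠ y k) ⊆ {b} := by
        intro k hk'
        simp only [Finset.mem_filter, Finset.mem_univ, true_and] at hk'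
        rcases eq_or_ne k a with rfl | hka
        · simp [Function.update_self] at hk'
        · rw [Function.update_of_ne hka] at hk'
          rcases hk k hk' with rfl | rfl
          · exact absurd rfl hka
          · simp
      calc hammingDist (Function.update x a (y a)) y
          = (Finset.univ.filter fun k => Function.update x a (y a) k ≠ y k).card := rfl
        _ ≤ ({b} : Finset (Fin n)).card := Finset.card_le_card hsub
        _ = 1 := Finset.card_singleton b
    have hdi : hammingDist (Function.update x i (y i)) y ≤ 1 :=
      hdist i j (fun k hk => (hmem k).mp hk)
    have hdj : hammingDist (Function.update x j (y j)) y ≤ 1 :=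
      hdist j i (fun k hk => ((hmem k).mp hk).symm)
    have hTsub : ({(i, y i), (j, y j)} : Finset (Fin n × Fin q)) ⊆ S := by
      intro p hp
      simp only [Finset.mem_insert, Finset.mem_singleton] at hp
      rcases hp with rfl | rfl <;> simp [hS, hxi.symm, hxj.symm] <;> tauto
    have hne : ((i, y i) : Fin n × Fin q) ≠ (j, y j) := by
      simp [Prod.ext_iff]; intro h; exact absurd h hij
    calc (2 : ℕ) = ∑ p ∈ ({(i, y i), (j, y j)} : Finset (Fin n × Fin q)),
          (if hammingDist (Function.update x p.1 p.2) y ≤ 1 then 1 else 0) := by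
          rw [Finset.sum_pair hne, if_pos hdi, if_pos hdj]
      _ ≤ _ := Finset.sum_le_sum_of_subset hTsub
  -- double counting: 2 * A₂ ≤ ∑_{p ∈ S} countP (dist-2 ∧ in ball of update) C
  have main : 2 * C.countP P2 ≤ ∑ p ∈ S, C.countP
      (fun y => P2 y ∧ hammingDist (Function.update x p.1 p.2) y ≤ 1) := by
    have step1 : 2 * C.countP P2 = (C.map fun y => 2 * (if P2 y then 1 else 0)).sum := by
      rw [countP_as_sum, ← Multiset.sum_map_mul_left]
    have step2 : (C.map fun y => 2 * (if P2 y then 1 else 0)).sum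
        ≤ (C.map fun y => ∑ p ∈ S, ind p y).sum := by
      apply Multiset.sum_map_le_sum_map
      intro y _
      by_cases hy : P2 y
      · rw [if_pos hy, mul_one]
        calc (2:ℕ) ≤ ∑ p ∈ S, (if hammingDist (Function.update x p.1 p.2) y ≤ 1
              then 1 else 0) := key1 y hy
          _ = ∑ p ∈ S, ind p y := by
              apply Finset.sum_congr rfl
              intro p _
              exact (if_congr (and_iff_right hy) rfl rfl).symm
      · simp [hy]
    rw [step1]
    refine step2.trans ?_
    rw [msum_swap]
    apply le_of_eq
    apply Finset.sum_congr rfl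
    intro p _
    rw [countP_as_sum]
  -- per-pair bound
  have perpair : ∀ p ∈ S, C.countP
      (fun y => P2 y ∧ hammingDist (Function.update x p.1 p.2) y ≤ 1)
      ≤ lam - C.count x := by
    intro p _
    apply Nat.le_sub_of_add_le
    set v := Function.update x p.1 p.2 with hv
    have hcount : C.count x = C.countP (x = ·) := by
      rw [Multiset.count_eq_card_filter_eq, Multiset.countP_eq_card_filter]
    rw [hcount]
    have hdisj : C.filter (fun y => (P2 y ∧ hammingDist v y ≤ 1) ∧ x = y) = 0 := by
      rw [Multiset.filter_eq_nil]
      rintro y _ ⟨⟨h2, _⟩, rfl⟩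
      rw [hP2, hammingDist_self] at h2
      exact absurd h2 (by norm_num)
    have hsum : C.countP (fun y => P2 y ∧ hammingDist v y ≤ 1) + C.countP (x = ·)
        = C.countP (fun y => (P2 y ∧ hammingDist v y ≤ 1) ∨ x = y) := by
      simp only [Multiset.countP_eq_card_filter]
      rw [← Multiset.card_add, Multiset.filter_add_filter, hdisj, add_zero]
    rw [hsum]
    calc C.countP (fun y => (P2 y ∧ hammingDist v y ≤ 1) ∨ x = y)
        ≤ C.countP (fun y => hammingDist v y ≤ 1) := by
          simp only [Multiset.countP_eq_card_filter]
          apply Multiset.card_le_card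
          apply Multiset.monotone_filter_right
          rintro y (⟨_, h1⟩ | rfl)
          · exact h1
          · exact hd_update_le x p.1 p.2
      _ ≤ lam := by rw [Multiset.countP_eq_card_filter]; exact hpack v
  -- combine in ℕ
  have final : 2 * C.countP P2 ≤ n * (q - 1) * (lam - C.count x) := by
    calc 2 * C.countP P2 ≤ ∑ p ∈ S, C.countP
          (fun y => P2 y ∧ hammingDist (Function.update x p.1 p.2) y ≤ 1) := main
      _ ≤ ∑ _p ∈ S, (lam - C.count x) := Finset.sum_le_sum perpair
      _ = S.card * (lam - C.count x) := by rw [Finset.sum_const, smul_eq_mul]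
      _ = n * (q - 1) * (lam - C.count x) := by rw [hScard]
  -- pass to ℚ
  have hA2 : (C.filter (fun y => hammingDist x y = 2)).card = C.countP P2 := by
    rw [Multiset.countP_eq_card_filter]
  rw [hA2, le_div_iff₀ (by norm_num : (0:ℚ) < 2)]
  have hcast := (Nat.cast_le (α := ℚ)).mpr final
  have hq1 : 1 ≤ q := by omega
  push_cast [Nat.cast_sub hm, Nat.cast_sub hq1] at hcast
  linarith
end

section
/- Let q ≥ 2, n = (q^m−1)/(q−1), n' = (q^{m−1}−1)/(q−1), n'' = q^{m−1}. Let (B_0,...,B_{n''−1}) be a partition of the vertex set of H(n'−1,q) into codes with parameters (n'−1, q^{n'−1−(m−1)}, 3)_q, and let (D_0,...,D_{n''−1}) be a partition of the code M_0 = {x_1...x_{n''} : x_1+...+x_{n''} ≡ 0 (mod q)} into n'' codes with parameters (n'', q^{n''−m}, 3)_q. Then S = ⋃_{i=0}^{q^{m−1}−1} D_i B_i (concatenation D_iB_i = {dc : d∈D_i, c∈B_i}) is a code of length n−1, size q^{n−1−m}, and minimum Hamming distance 3. -/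
/-!
Two words of `S` from the same block `D_i B_i` either differ in their `D_i`-part or agree there
and differ in their `B_i`-part, so they are at distance at least 3. Two words from different
blocks have distinct heads in `M_0` and distinct tails (the `B_i` are disjoint); changing a
single coordinate changes the digit sum modulo `q`, so `M_0` has minimum distance 2, and the
distances add up to at least `2 + 1`. The size is `q^(m-1) · q^(n''-m) · q^(n'-1-(m-1))`,
and `n = n'' + n'`.
-/

open Finset Function

section Hamming

variable {ι α : Type*} [Fintype ι] [DecidableEq α]

def MinDistAtLeast (C : Finset (ι → α)) (d : ℕ) : Prop :=
  (C : Set (ι → α)).Pairwise fun x y => d ≤ hammingDist x y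

theorem two_le_hammingDist_of_sum_eq {G : Type*} [AddCancelCommMonoid G] {φ : α → G}
    (hφ : Injective φ) {x y : ι → α} (hsum : ∑ k, φ (x k) = ∑ k, φ (y k)) (hxy : x ≠ y) :
    2 ≤ hammingDist x y := by
  classical
  by_contra! hlt
  have hone : hammingDist x y = 1 := by
    have := hammingDist_pos.2 hxy
    omega
  obtain ⟨k₀, hk₀⟩ := card_eq_one.1 hone
  have hmem (k : ι) : x k ≠ y k ↔ k = k₀ := by simpa using Finset.ext_iff.1 hk₀ k
  have hagree : ∀ k ∈ univ.erase k₀, φ (x k) = φ (y k) := fun k hk =>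
    congrArg φ (not_not.1 fun h => (mem_erase.1 hk).1 ((hmem k).1 h))
  rw [← add_sum_erase _ _ (mem_univ k₀), ← add_sum_erase _ _ (mem_univ k₀),
    sum_congr rfl hagree] at hsum
  exact (hmem k₀).2 rfl (hφ (add_right_cancel hsum))

theorem minDistAtLeast_two_sum_mod_eq_zero [DecidableEq ι] (q : ℕ) :
    MinDistAtLeast (univ.filter fun x : ι → Fin q => (∑ k, (x k : ℕ)) % q = 0) 2 := by
  intro x hx y hy hxy
  simp only [coe_filter, mem_univ, true_and, Set.mem_ofPred_eq] at hx hy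
  refine two_le_hammingDist_of_sum_eq (φ := fun a : Fin q => ((a : ℕ) : ZMod q)) ?_ ?_ hxy
  · intro a b h
    simpa [ZMod.natCast_eq_natCast_iff', Nat.mod_eq_of_lt, Fin.ext_iff] using h
  · simp only [← Nat.cast_sum]
    exact (ZMod.natCast_eq_natCast_iff' _ _ _).2 (hx.trans hy.symm)

theorem hammingDist_append {a b : ℕ} (x x' : Fin a → α) (y y' : Fin b → α) :
    hammingDist (Fin.append x y) (Fin.append x' y') = hammingDist x x' + hammingDist y y' := by
  simp only [hammingDist, card_filter, Fin.sum_univ_add, Fin.append_left, Fin.append_right]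

end Hamming

section Concatenation

variable {ι α : Type*} [Fintype ι] [DecidableEq α] {a b : ℕ}
  {D : ι → Finset (Fin a → α)} {B : ι → Finset (Fin b → α)}

def concatCode (D : ι → Finset (Fin a → α)) (B : ι → Finset (Fin b → α)) :
    Finset (Fin (a + b) → α) :=
  univ.biUnion fun i => (D i ×ˢ B i).image fun p => Fin.append p.1 p.2

theorem mem_concatCode {z : Fin (a + b) → α} :
    z ∈ concatCode D B ↔ ∃ i, ∃ x ∈ D i, ∃ y ∈ B i, Fin.append x y = z := by
  simp [concatCode, and_assoc]

theorem card_concatCode (hD : Pairwise (Disjoint on D)) :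
    (concatCode D B).card = ∑ i, (D i).card * (B i).card := by
  have happend : Injective fun p : (Fin a → α) × (Fin b → α) => Fin.append p.1 p.2 :=
    (Fin.appendEquiv a b).injective
  rw [concatCode, card_biUnion]
  · exact sum_congr rfl fun i _ => by rw [card_image_of_injective _ happend, card_product]
  · intro i _ j _ hij
    simp only [onFun, disjoint_image happend, disjoint_product]
    exact Or.inl (hD hij)

theorem minDistAtLeast_concatCode {d : ℕ} (hD : ∀ i, MinDistAtLeast (D i) (d + 1))
    (hB : ∀ i, MinDistAtLeast (B i) (d + 1)) (hDunion : MinDistAtLeast (univ.biUnion D) d)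
    (hDdisj : Pairwise (Disjoint on D)) (hBdisj : Pairwise (Disjoint on B)) :
    MinDistAtLeast (concatCode D B) (d + 1) := by
  intro z hz z' hz' hne
  obtain ⟨i, x, hx, y, hy, rfl⟩ := mem_concatCode.1 hz
  obtain ⟨j, x', hx', y', hy', rfl⟩ := mem_concatCode.1 hz'
  rw [hammingDist_append]
  by_cases hij : i = j
  · subst hij
    by_cases hxx : x = x'
    · subst hxx
      have hyy : y ≠ y' := by rintro rfl; exact hne rfl
      simpa using hB i hy hy' hyy
    · exact (hD i hx hx' hxx).trans (Nat.le_add_right _ _)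
  · have hxx : x ≠ x' := fun h => disjoint_left.1 (hDdisj hij) hx (h ▸ hx')
    have hyy : y ≠ y' := fun h => disjoint_left.1 (hBdisj hij) hy (h ▸ hy')
    have hhead := hDunion (mem_biUnion.2 ⟨i, mem_univ i, hx⟩)
      (mem_biUnion.2 ⟨j, mem_univ j, hx'⟩) hxx
    have htail := hammingDist_pos.2 hyy
    omega

end Concatenation

theorem card_mul_eq_card_of_partition {ι α : Type*} [Fintype ι] [Fintype α] [DecidableEq α]
    {B : ι → Finset α} (hdisj : Pairwise (Disjoint on B)) (hunion : univ.biUnion B = univ)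
    {c : ℕ} (hc : ∀ i, (B i).card = c) : Fintype.card ι * c = Fintype.card α := by
  have h := card_biUnion (s := univ) fun i _ j _ hij => hdisj hij
  rw [hunion, card_univ] at h
  simp [h, hc]

theorem eq_pow_add_of_mul_sub_one_eq {q k n n' : ℕ} (hq : 2 ≤ q)
    (hn : n * (q - 1) = q ^ (k + 1) - 1) (hn' : n' * (q - 1) = q ^ k - 1) : n = q ^ k + n' := by
  refine Nat.eq_of_mul_eq_mul_right (show 0 < q - 1 by omega) ?_
  have hpos : 1 ≤ q ^ k := Nat.one_le_pow _ _ (by omega)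
  have hpos' : 1 ≤ q ^ (k + 1) := Nat.one_le_pow _ _ (by omega)
  rw [hn, add_mul, hn']
  zify [hpos, hpos', show 1 ≤ q by omega]
  ring

/-- Concatenation construction of shortened-1-perfect-like codes. -/
theorem stmt_14 (q m n n' : ℕ) (hq : 2 ≤ q) (hm : 2 ≤ m)
    (hn : n * (q - 1) = q ^ m - 1) (hn' : n' * (q - 1) = q ^ (m - 1) - 1)
    (B : Fin (q ^ (m - 1)) → Finset (Fin (n' - 1) → Fin q))
    (D : Fin (q ^ (m - 1)) → Finset (Fin (q ^ (m - 1)) → Fin q))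
    (hBdisj : ∀ i j, i ≠ j → Disjoint (B i) (B j))
    (hBunion : Finset.univ.biUnion B = Finset.univ)
    (hBcard : ∀ i, (B i).card = q ^ (n' - 1 - (m - 1)))
    (hBdist : ∀ i, ∀ x ∈ B i, ∀ y ∈ B i, x ≠ y → 3 ≤ hammingDist x y)
    (hDdisj : ∀ i j, i ≠ j → Disjoint (D i) (D j))
    (hDunion : Finset.univ.biUnion D
      = Finset.univ.filter (fun x : Fin (q ^ (m - 1)) → Fin q =>
          (∑ k, (x k : ℕ)) % q = 0))
    (hDcard : ∀ i, (D i).card = q ^ (q ^ (m - 1) - m))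
    (hDdist : ∀ i, ∀ x ∈ D i, ∀ y ∈ D i, x ≠ y → 3 ≤ hammingDist x y)
    (S : Finset (Fin (q ^ (m - 1) + (n' - 1)) → Fin q))
    (hS : S = Finset.univ.biUnion (fun i => ((D i) ×ˢ (B i)).image
      (fun p => Fin.append p.1 p.2))) :
    S.card = q ^ (n - 1 - m) ∧
    ∀ x ∈ S, ∀ y ∈ S, x ≠ y → 3 ≤ hammingDist x y := by
  have hlen : n = q ^ (m - 1) + n' :=
    eq_pow_add_of_mul_sub_one_eq hq (by rwa [Nat.sub_add_cancel (by omega)]) hn'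
  have hm_le : m ≤ q ^ (m - 1) := by
    have := Nat.lt_pow_self (n := m - 1) hq
    omega
  -- the exponent `n' - 1 - (m - 1)` of `hBcard` is truncated unless this holds
  have hB_exp : m - 1 ≤ n' - 1 := by
    have h := card_mul_eq_card_of_partition (fun i j => hBdisj i j) hBunion hBcard
    simp only [Fintype.card_fin, Fintype.card_pi, prod_const, card_univ, ← pow_add] at h
    have := Nat.pow_right_injective hq h
    omega
  obtain rfl : S = concatCode D B := hS
  refine ⟨?_, minDistAtLeast_concatCode (d := 2) hDdist hBdist ?_
    (fun i j => hDdisj i j) (fun i j => hBdisj i j)⟩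
  · rw [card_concatCode (B := B) fun i j => hDdisj i j]
    simp only [hDcard, hBcard, sum_const, card_univ, Fintype.card_fin, smul_eq_mul, ← pow_add]
    congr 1
    omega
  · rw [hDunion]
    exact minDistAtLeast_two_sum_mod_eq_zero q
end

section
/- Let C be a ternary code with parameters of a shortened 1-perfect code (length n−1, size 3^{n−1−m}, minimum distance 3, where n = (3^m−1)/2). Then C can be lengthened to a ternary 1-perfect code of length n if and only if the graph on C^{(2)} (words at distance exactly 2 from C) with edges joining pairs of words at Hamming distance 1 or 2 is bipartite, with parts C' and C'' such that C·0 ∪ C'·1 ∪ C''·2 is 1-perfect. -/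
lemma snoc_eta {nn : ℕ} (c : Fin (nn+1) → Fin 3) :
    Fin.snoc (fun k : Fin nn => c k.castSucc) (c (Fin.last nn)) = c := by
  funext i
  induction i using Fin.lastCases with
  | last => simp
  | cast k => simp

lemma hd_snoc {nn : ℕ} (x y : Fin nn → Fin 3) (a b : Fin 3) :
    hammingDist (Fin.snoc x a : Fin (nn+1) → Fin 3) (Fin.snoc y b)
      = hammingDist x y + if a = b then 0 else 1 := by
  unfold hammingDist
  rw [Finset.card_filter, Finset.card_filter, Fin.sum_univ_castSucc]
  simp [Fin.snoc_castSucc, Fin.snoc_last]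

lemma fin3_cases (e : Fin 3) : e = 0 ∨ e = 1 ∨ e = 2 := by revert e; decide

lemma fin3_succ_ne (a : Fin 3) : a ≠ a + 1 := by revert a; decide

lemma snoc_inj {nn : ℕ} {x y : Fin nn → Fin 3} {a b : Fin 3}
    (h : (Fin.snoc x a : Fin (nn+1) → Fin 3) = Fin.snoc y b) : x = y ∧ a = b := by
  constructor
  · funext k; have := congrFun h k.castSucc; simpa using this
  · have := congrFun h (Fin.last nn); simpa using this

lemma exists_mid {N : ℕ} (c c' : Fin N → Fin 3) (h : hammingDist c c' ≤ 2) :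
    ∃ z, hammingDist z c ≤ 1 ∧ hammingDist z c' ≤ 1 := by
  rcases le_or_gt (hammingDist c c') 1 with h1 | h1
  · exact ⟨c, by simp, h1⟩
  have h2 : hammingDist c c' = 2 := le_antisymm h h1
  have hne : c ≠ c' := by
    intro hc; rw [hc] at h2; simp at h2
  obtain ⟨i, hi⟩ : ∃ i, c i ≠ c' i := Function.ne_iff.mp hne
  refine ⟨Function.update c i (c' i), ?_, ?_⟩
  · have hsub : ({j | Function.update c i (c' i) j ≠ c j} : Finset (Fin N)) ⊆ {i} := by
      intro j hj
      simp only [Finset.mem_filter, Finset.mem_univ, true_and] at hj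
      simp only [Finset.mem_singleton]
      by_contra hji
      exact hj (Function.update_of_ne hji _ _)
    calc hammingDist (Function.update c i (c' i)) c
        = ({j | Function.update c i (c' i) j ≠ c j} : Finset (Fin N)).card := rfl
      _ ≤ ({i} : Finset (Fin N)).card := Finset.card_le_card hsub
      _ = 1 := Finset.card_singleton i
  · have hsub : ({j | Function.update c i (c' i) j ≠ c' j} : Finset (Fin N)) ⊆
        ({j | c j ≠ c' j} : Finset (Fin N)).erase i := by
      intro j hj
      simp only [Finset.mem_filter, Finset.mem_univ, true_and] at hj
      rw [Finset.mem_erase]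
      have hji : j ≠ i := by
        intro hji; subst hji; exact hj (Function.update_self _ _ _)
      rw [Function.update_of_ne hji] at hj
      simp [hji, hj]
    calc hammingDist (Function.update c i (c' i)) c'
        ≤ (({j | c j ≠ c' j} : Finset (Fin N)).erase i).card := Finset.card_le_card hsub
      _ = hammingDist c c' - 1 := by
          rw [Finset.card_erase_of_mem]; · rfl
          simp [hi]
      _ ≤ 1 := by omega

/-- A ternary shortened-1-perfect-like code can be lengthened to a 1-perfect code
iff the distance-1-and-2 graph on C⁽²⁾ is bipartite with parts giving a
1-perfect lengthening. -/
theorem stmt_19 (m nn : ℕ) (hm : 2 ≤ m) (hn : (nn + 1) * 2 = 3 ^ m - 1)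
    (C : Finset (Fin nn → Fin 3))
    (hcard : C.card = 3 ^ (nn - m))
    (hdist : ∀ x ∈ C, ∀ y ∈ C, x ≠ y → 3 ≤ hammingDist x y) :
    (∃ P : Finset (Fin (nn + 1) → Fin 3),
        (∀ x : Fin (nn + 1) → Fin 3, ∃! c, c ∈ P ∧ hammingDist x c ≤ 1) ∧
        C = (P.filter (fun c => c (Fin.last nn) = 0)).image
          (fun c => fun k : Fin nn => c k.castSucc))
    ↔
    (∃ C' C'' : Finset (Fin nn → Fin 3),
        C' ∪ C'' = Finset.univ.filter (fun x =>
          (∀ b ∈ C, 2 ≤ hammingDist x b) ∧ ∃ b ∈ C, hammingDist x b = 2) ∧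
        Disjoint C' C'' ∧
        (∀ x ∈ C', ∀ y ∈ C', x ≠ y →
          hammingDist x y ≠ 1 ∧ hammingDist x y ≠ 2) ∧
        (∀ x ∈ C'', ∀ y ∈ C'', x ≠ y →
          hammingDist x y ≠ 1 ∧ hammingDist x y ≠ 2) ∧
        (∀ x : Fin (nn + 1) → Fin 3, ∃! c,
          c ∈ (C.image (fun b => Fin.snoc b (0 : Fin 3)) ∪
               C'.image (fun b => Fin.snoc b (1 : Fin 3)) ∪
               C''.image (fun b => Fin.snoc b (2 : Fin 3))) ∧
          hammingDist x c ≤ 1)) := by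
  have hnn : 0 < nn := by
    have h9 : 9 ≤ 3 ^ m := by
      calc (9:ℕ) = 3 ^ 2 := by norm_num
        _ ≤ 3 ^ m := Nat.pow_le_pow_right (by norm_num) hm
    omega
  constructor
  · rintro ⟨P, hP, hC⟩
    -- minimum distance of P is at least 3
    have hmind : ∀ c ∈ P, ∀ c' ∈ P, c ≠ c' → 3 ≤ hammingDist c c' := by
      intro c hc c' hc' hne
      by_contra hlt
      push_neg at hlt
      obtain ⟨z, hz, hz'⟩ := exists_mid c c' (by omega)
      obtain ⟨w, -, huniq⟩ := hP z
      exact hne ((huniq c ⟨hc, hz⟩).trans (huniq c' ⟨hc', hz'⟩).symm)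
    -- membership characterization
    have memD : ∀ (e : Fin 3) (b : Fin nn → Fin 3),
        b ∈ (P.filter (fun c => c (Fin.last nn) = e)).image
              (fun c => fun k : Fin nn => c k.castSucc)
          ↔ (Fin.snoc b e : Fin (nn+1) → Fin 3) ∈ P := by
      intro e b
      simp only [Finset.mem_image, Finset.mem_filter]
      constructor
      · rintro ⟨c, ⟨hcP, hc0⟩, rfl⟩
        have heta := snoc_eta c
        rw [hc0] at heta
        rw [heta]
        exact hcP
      · intro h
        exact ⟨Fin.snoc b e, ⟨h, by simp⟩, by funext k; simp⟩
    have memC : ∀ b : Fin nn → Fin 3, b ∈ C ↔ (Fin.snoc b 0 : Fin (nn+1) → Fin 3) ∈ P := by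
      intro b; rw [hC]; exact memD 0 b
    set C' := (P.filter (fun c => c (Fin.last nn) = 1)).image
      (fun c => fun k : Fin nn => c k.castSucc) with hC'
    set C'' := (P.filter (fun c => c (Fin.last nn) = 2)).image
      (fun c => fun k : Fin nn => c k.castSucc) with hC''
    -- distance from C is at least 2 for members of C' and C''
    have hdge : ∀ (e : Fin 3), e ≠ 0 → ∀ x, (Fin.snoc x e : Fin (nn+1) → Fin 3) ∈ P →
        ∀ b ∈ C, 2 ≤ hammingDist x b := by
      intro e he x hx b hb
      have hbP := (memC b).mp hb
      have hne : (Fin.snoc x e : Fin (nn+1) → Fin 3) ≠ Fin.snoc b 0 := by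
        intro h; exact he (snoc_inj h).2
      have h3 := hmind _ hx _ hbP hne
      rw [hd_snoc, if_neg he] at h3
      omega
    -- key : members of C' / C'' are at distance exactly 2 from some codeword of C
    have key : ∀ (e : Fin 3), e ≠ 0 → ∀ x, (Fin.snoc x e : Fin (nn+1) → Fin 3) ∈ P →
        ∃ b ∈ C, hammingDist x b = 2 := by
      intro e he x hx
      set i0 : Fin nn := ⟨0, hnn⟩ with hi0
      set z := Function.update x i0 (x i0 + 1) with hz
      have hxzne : x ≠ z := by
        intro h
        have := congrFun h i0
        rw [hz, Function.update_self] at this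
        exact fin3_succ_ne _ this
      have hxz : hammingDist x z = 1 := by
        have hfe : ({j | x j ≠ z j} : Finset (Fin nn)) = {i0} := by
          ext j
          simp only [Finset.mem_filter, Finset.mem_univ, true_and, Finset.mem_singleton]
          constructor
          · intro hj
            by_contra hji
            exact hj (by rw [hz, Function.update_of_ne hji])
          · rintro rfl
            rw [hz, Function.update_self]
            exact fin3_succ_ne _
        calc hammingDist x z = ({j | x j ≠ z j} : Finset (Fin nn)).card := rfl
          _ = 1 := by rw [hfe]; exact Finset.card_singleton i0
      obtain ⟨c, ⟨hcP, hdc⟩, -⟩ := hP (Fin.snoc z 0)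
      have heta := snoc_eta c
      set w := (fun k : Fin nn => c k.castSucc) with hw
      set e' := c (Fin.last nn) with he'
      rcases eq_or_ne e' 0 with h0 | h0
      · -- the codeword near z·0 ends with 0 and gives b ∈ C at distance 2 from x
        rw [h0] at heta
        have hwC : w ∈ C := (memC w).mpr (by rw [heta]; exact hcP)
        rw [← heta, hd_snoc] at hdc
        simp only [if_pos rfl] at hdc
        have htri : hammingDist x w ≤ hammingDist x z + hammingDist z w :=
          hammingDist_triangle x z w
        have hge := hdge e he x hx w hwC
        exact ⟨w, hwC, by omega⟩
      · -- impossible: would give two codewords of P too close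
        exfalso
        rw [← heta, hd_snoc, if_neg (fun h => h0 h.symm)] at hdc
        have hdc' : hammingDist z w = 0 := by omega
        have hzw : z = w := hammingDist_eq_zero.mp hdc'
        have hne : (Fin.snoc x e : Fin (nn+1) → Fin 3) ≠ Fin.snoc w e' := by
          intro h
          exact hxzne ((snoc_inj h).1.trans hzw.symm)
        have h3 := hmind _ hx _ (by rw [heta]; exact hcP) hne
        rw [hd_snoc, ← hzw] at h3
        have hle : (if e = e' then 0 else 1) ≤ 1 := by split <;> omega
        omega
    refine ⟨C', C'', ?_, ?_, ?_, ?_, ?_⟩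
    · -- C' ∪ C'' is the distance-2 shell
      ext x
      simp only [Finset.mem_union, Finset.mem_filter, Finset.mem_univ, true_and]
      constructor
      · rintro (hx | hx)
        · have hxP := (memD 1 x).mp hx
          exact ⟨hdge 1 (by decide) x hxP, key 1 (by decide) x hxP⟩
        · have hxP := (memD 2 x).mp hx
          exact ⟨hdge 2 (by decide) x hxP, key 2 (by decide) x hxP⟩
      · rintro ⟨hall, -, -⟩
        obtain ⟨c, ⟨hcP, hdc⟩, -⟩ := hP (Fin.snoc x 0)
        have heta := snoc_eta c
        set w := (fun k : Fin nn => c k.castSucc) with hw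
        set e' := c (Fin.last nn) with he'
        rw [← heta, hd_snoc] at hdc
        rcases fin3_cases e' with h0 | h1 | h2
        · exfalso
          rw [h0] at heta
          have hwC : w ∈ C := (memC w).mpr (by rw [heta]; exact hcP)
          have := hall w hwC
          rw [h0, if_pos rfl] at hdc
          omega
        · left
          rw [h1] at heta
          have hxw : x = w := by
            rw [h1, if_neg (by decide : ¬ ((0:Fin 3) = 1))] at hdc
            exact hammingDist_eq_zero.mp (by omega)
          rw [hxw]
          exact (memD 1 w).mpr (by rw [heta]; exact hcP)
        · right
          rw [h2] at heta
          have hxw : x = w := by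
            rw [h2, if_neg (by decide : ¬ ((0:Fin 3) = 2))] at hdc
            exact hammingDist_eq_zero.mp (by omega)
          rw [hxw]
          exact (memD 2 w).mpr (by rw [heta]; exact hcP)
    · -- disjointness
      rw [Finset.disjoint_left]
      intro x hx1 hx2
      have h1 := (memD 1 x).mp hx1
      have h2 := (memD 2 x).mp hx2
      have hne : (Fin.snoc x 1 : Fin (nn+1) → Fin 3) ≠ Fin.snoc x 2 := by
        intro h; exact absurd (snoc_inj h).2 (by decide)
      have h3 := hmind _ h1 _ h2 hne
      rw [hd_snoc, if_neg (by decide : ¬ ((1:Fin 3) = 2))] at h3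
      simp at h3
    · -- distances within C'
      intro x hx y hy hxy
      have h3 := hmind _ ((memD 1 x).mp hx) _ ((memD 1 y).mp hy)
        (fun h => hxy (snoc_inj h).1)
      rw [hd_snoc, if_pos rfl] at h3
      omega
    · -- distances within C''
      intro x hx y hy hxy
      have h3 := hmind _ ((memD 2 x).mp hx) _ ((memD 2 y).mp hy)
        (fun h => hxy (snoc_inj h).1)
      rw [hd_snoc, if_pos rfl] at h3
      omega
    · -- the union is exactly P, hence 1-perfect
      have hUP : (C.image (fun b => Fin.snoc b (0 : Fin 3)) ∪
               C'.image (fun b => Fin.snoc b (1 : Fin 3)) ∪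
               C''.image (fun b => Fin.snoc b (2 : Fin 3))) = P := by
        ext c
        simp only [Finset.mem_union, Finset.mem_image]
        constructor
        · rintro ((⟨b, hb, rfl⟩ | ⟨b, hb, rfl⟩) | ⟨b, hb, rfl⟩)
          · exact (memC b).mp hb
          · exact (memD 1 b).mp hb
          · exact (memD 2 b).mp hb
        · intro hc
          have heta := snoc_eta c
          rcases fin3_cases (c (Fin.last nn)) with h0 | h1 | h2
          · rw [h0] at heta
            exact Or.inl (Or.inl ⟨_, (memC _).mpr (by rw [heta]; exact hc), heta⟩)
          · rw [h1] at heta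
            exact Or.inl (Or.inr ⟨_, (memD 1 _).mpr (by rw [heta]; exact hc), heta⟩)
          · rw [h2] at heta
            exact Or.inr ⟨_, (memD 2 _).mpr (by rw [heta]; exact hc), heta⟩
      intro x
      rw [hUP]
      exact hP x
  · rintro ⟨C', C'', hsh, hdisj, h1, h2, hperf⟩
    refine ⟨_, hperf, ?_⟩
    ext b
    simp only [Finset.mem_image, Finset.mem_filter, Finset.mem_union]
    constructor
    · intro hb
      exact ⟨Fin.snoc b 0, ⟨Or.inl (Or.inl ⟨b, hb, rfl⟩), by simp⟩, by funext k; simp⟩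
    · rintro ⟨c, ⟨hc, hlast⟩, rfl⟩
      rcases hc with ((⟨a, ha, rfl⟩ | ⟨a, ha, rfl⟩) | ⟨a, ha, rfl⟩)
      · have hpr : (fun k : Fin nn =>
            (Fin.snoc a (0:Fin 3) : Fin (nn+1) → Fin 3) k.castSucc) = a := by
          funext k; simp
        rw [hpr]; exact ha
      · exfalso
        rw [Fin.snoc_last] at hlast
        exact absurd hlast (by decide)
      · exfalso
        rw [Fin.snoc_last] at hlast
        exact absurd hlast (by decide)
end
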